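/- arXiv:2108.03369 — 2 statements merged into one kernel-verified Lean document; each statement's English description precedes it below -/
import Mathlib

section
/- Let M be a three-valued model of an LPOD P. Then M is a model of the ×-reduct P^M_×. -/
/-! Four truth values F < F* < T* < T. -/
inductive V4 : Type
  | F | Fs | Ts | T
  deriving DecidableEq, Repr

instance : Fintype V4 where
  elems := {V4.F, V4.Fs, V4.Ts, V4.T}
  complete x := by cases x <;> simp

namespace V4

def toNat : V4 → ℕ
  | F => 0
  | Fs => 1
  | Ts => 2
  | T => 3

theorem toNat_injective : Function.Injective toNat := by
  intro a b h
  cases a <;> cases b <;> simp_all [toNat]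

instance : LinearOrder V4 := LinearOrder.lift' toNat toNat_injective

instance : BoundedOrder V4 where
  top := T
  le_top a := by cases a <;> decide
  bot := F
  bot_le a := by cases a <;> decide

/-- Negation-as-failure: `not φ` is `T` if `φ ≤ F*`, else `F`. -/
def notv (a : V4) : V4 := if a ≤ Fs then T else F

/-- Ordered disjunction on truth values: `u × v = v` if `u = F*`, else `u`. -/
def times (a b : V4) : V4 := if a = Fs then b else a

end V4

variable {α : Type}

/-- A ground literal: an atom together with a polarity (`true` = the atom itself,
`false` = its strong negation). -/
structure Lit (α : Type) where
  atom : α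
  positive : Bool
  deriving DecidableEq

/-- A (four-valued) interpretation assigns a truth value to every literal.
Three-valued interpretations are the `solid` ones (no `T*` value). -/
abbrev Interp (α : Type) := Lit α → V4

/-- `I` is solid (equivalently, three-valued) if it assigns `T*` to no literal. -/
def solid (I : Interp α) : Prop := ∀ l, I l ≠ V4.Ts

/-- `I` is consistent: no atom has both the atom and its strong negation `T`. -/
def consistentI (I : Interp α) : Prop :=
  ∀ a : α, ¬ (I ⟨a, true⟩ = V4.T ∧ I ⟨a, false⟩ = V4.T)

/-- `I` takes values only in `{F, T}`. -/
def twoValued (I : Interp α) : Prop := ∀ l, I l = V4.F ∨ I l = V4.T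

/-- Value of the conjunction of a list of literals. -/
def evalConj (I : Interp α) (L : List (Lit α)) : V4 := (L.map I).foldr min V4.T

/-- Value of the conjunction `not B1 ∧ ⋯ ∧ not Bk`. -/
def evalNegs (I : Interp α) (L : List (Lit α)) : V4 :=
  (L.map (fun b => V4.notv (I b))).foldr min V4.T

/-- Value of the disjunction of a list of literals. -/
def evalDisj (I : Interp α) (L : List (Lit α)) : V4 := (L.map I).foldr max V4.F

/-- Value of an ordered disjunction of the given (nonempty) list of values.
(`F*` is a right identity for `×`, so the fold computes `v1 × ⋯ × vn`.) -/
def evalOD (vs : List V4) : V4 := vs.foldr V4.times V4.Fs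

/-- Pointwise `≤` on interpretations. -/
def interpLE (I J : Interp α) : Prop := ∀ l, I l ≤ J l

/-- The four-valued relation `⪯`: `u ⪯ v` iff `u = v` or `u ≺ v`, where
`F ≺ F*`, `F ≺ T*`, `F ≺ T` and `T* ≺ T`.  On three-valued (solid)
interpretations it restricts to the ordering generated by `F ≺ F*`, `F ≺ T`. -/
def preceq (u v : V4) : Prop :=
  u = v ∨ (u = V4.F ∧ v ≠ V4.F) ∨ (u = V4.Ts ∧ v = V4.T)

/-- Pointwise `⪯` on interpretations. -/
def interpPreceq (I J : Interp α) : Prop := ∀ l, preceq (I l) (J l)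

/-- The set of literals that are `T` in `I`. -/
def collapse (I : Interp α) : Set (Lit α) := { l | I l = V4.T }

/-! ### LPOD rules -/

/-- An LPOD rule `C1 × ⋯ × Cn ← A1,…,Am, not B1,…,not Bk` with head
`c1 :: cs` (so the head is nonempty). -/
structure Rule (α : Type) where
  c1 : Lit α
  cs : List (Lit α)
  pos : List (Lit α)
  neg : List (Lit α)

def Rule.headList (R : Rule α) : List (Lit α) := R.c1 :: R.cs

def Rule.headVal (R : Rule α) (I : Interp α) : V4 := evalOD (R.headList.map I)

def Rule.bodyVal (R : Rule α) (I : Interp α) : V4 :=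
  min (evalConj I R.pos) (evalNegs I R.neg)

/-- `I` satisfies the rule `R` (the rule evaluates to `T`). -/
def ruleSat (I : Interp α) (R : Rule α) : Prop := R.bodyVal I ≤ R.headVal I

/-- `I` is a model of the LPOD `P`. -/
def isModel (I : Interp α) (P : Set (Rule α)) : Prop := ∀ R ∈ P, ruleSat I R

/-! ### The ×-reduct of an LPOD -/

/-- A reduct rule `C ← [F*,] A1,…,Am`; `fstar` records whether the constant `F*`
occurs in the body. -/
structure RedRule (α : Type) where
  head : Lit α
  pos : List (Lit α)
  fstar : Bool

def RedRule.bodyVal (r : RedRule α) (I : Interp α) : V4 :=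
  min (if r.fstar then V4.Fs else V4.T) (evalConj I r.pos)

def redSat (I : Interp α) (r : RedRule α) : Prop := r.bodyVal I ≤ I r.head

def redModel (I : Interp α) (Q : Set (RedRule α)) : Prop := ∀ r ∈ Q, redSat I r

/-- Reduct rules generated by a head `C1,…,Cn`: rules `Cj ← F*, body` for
`j < r` and `Cr ← body`, where `r` is the least index with
`I C1 = ⋯ = I C_{r-1} = F*` and (`r = n` or `I Cr ≠ F*`). -/
def xredHead (I : Interp α) (body : List (Lit α)) : List (Lit α) → List (RedRule α)
  | [] => []
  | [c] => [⟨c, body, false⟩]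
  | c :: c' :: rest =>
    if I c = V4.Fs then ⟨c, body, true⟩ :: xredHead I body (c' :: rest)
    else [⟨c, body, false⟩]

/-- The ×-reduct of a rule w.r.t. `I`. -/
def xredRule (I : Interp α) (R : Rule α) : List (RedRule α) :=
  if ∃ b ∈ R.neg, I b = V4.T then [] else xredHead I R.pos R.headList

/-- The ×-reduct of an LPOD w.r.t. `I`. -/
def xreduct (I : Interp α) (P : Set (Rule α)) : Set (RedRule α) :=
  { r | ∃ R ∈ P, r ∈ xredRule I R }

/-- `M` is a three-valued answer set of the LPOD `P`: a consistent three-valued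
interpretation that is the `≤`-least (three-valued) model of `P^M_×`. -/
def threeAnswerSet (P : Set (Rule α)) (M : Interp α) : Prop :=
  solid M ∧ consistentI M ∧ redModel M (xreduct M P) ∧
  ∀ N : Interp α, solid N → redModel N (xreduct M P) → interpLE M N

/-! ### Two-valued notions: Brewka answer sets and GL answer sets -/

/-- A set of literals is consistent if it contains no complementary pair. -/
def twoConsistent (N : Set (Lit α)) : Prop :=
  ∀ a : α, ¬ (Lit.mk a true ∈ N ∧ Lit.mk a false ∈ N)

/-- `N` is a (two-valued) Brewka-model of the LPOD `P`. -/
def brewkaModel (N : Set (Lit α)) (P : Set (Rule α)) : Prop :=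
  ∀ R ∈ P, (∀ a ∈ R.pos, a ∈ N) → (∀ b ∈ R.neg, b ∉ N) → ∃ c ∈ R.headList, c ∈ N

/-- A positive rule `C ← A1,…,Am`. -/
structure PosRule (α : Type) where
  head : Lit α
  pos : List (Lit α)

/-- `N` is a two-valued model of a positive program. -/
def posModel (N : Set (Lit α)) (Q : Set (PosRule α)) : Prop :=
  ∀ r ∈ Q, (∀ a ∈ r.pos, a ∈ N) → r.head ∈ N

/-- The Brewka ×-reduct of an LPOD w.r.t. a set of literals `N`:
`Ci ← A1,…,Am` whenever `Ci ∈ N` and `N ∩ {C1,…,C_{i-1},B1,…,Bk} = ∅`. -/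
def brewkaReduct (N : Set (Lit α)) (P : Set (Rule α)) : Set (PosRule α) :=
  { r | ∃ R ∈ P, ∃ l1 l2 : List (Lit α),
      R.headList = l1 ++ r.head :: l2 ∧ r.pos = R.pos ∧ r.head ∈ N ∧
      (∀ c ∈ l1, c ∉ N) ∧ (∀ b ∈ R.neg, b ∉ N) }

/-- `N` is a Brewka answer set of the LPOD `P`. -/
def brewkaAnswerSet (P : Set (Rule α)) (N : Set (Lit α)) : Prop :=
  twoConsistent N ∧ brewkaModel N P ∧ posModel N (brewkaReduct N P) ∧
  ∀ N', posModel N' (brewkaReduct N P) → N ⊆ N'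

/-- The Gelfond–Lifschitz reduct of an extended logic program (an LPOD all
of whose rule heads are single literals) w.r.t. a set of literals `N`. -/
def glReduct (P : Set (Rule α)) (N : Set (Lit α)) : Set (PosRule α) :=
  { r | ∃ R ∈ P, (∀ b ∈ R.neg, b ∉ N) ∧ r.head = R.c1 ∧ r.pos = R.pos }

/-- `N` is a standard answer set of the extended logic program `P`: a consistent
set of literals that is the least model of `P^N`. -/
def stdAnswerSet (P : Set (Rule α)) (N : Set (Lit α)) : Prop :=
  twoConsistent N ∧ posModel N (glReduct P N) ∧
  ∀ N', posModel N' (glReduct P N) → N ⊆ N'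

/-! ### DLPODs -/

/-- A DLPOD rule `𝒞1 × ⋯ × 𝒞n ← A1,…,Am, not B1,…,not Bk`, where each `𝒞i`
is a disjunction of literals; the head is `c1 :: cs` (nonempty). -/
structure DRule (α : Type) where
  c1 : List (Lit α)
  cs : List (List (Lit α))
  pos : List (Lit α)
  neg : List (Lit α)

def DRule.headList (R : DRule α) : List (List (Lit α)) := R.c1 :: R.cs

def DRule.headVal (R : DRule α) (I : Interp α) : V4 :=
  evalOD (R.headList.map (evalDisj I))

def DRule.bodyVal (R : DRule α) (I : Interp α) : V4 :=
  min (evalConj I R.pos) (evalNegs I R.neg)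

def dRuleSat (I : Interp α) (R : DRule α) : Prop := R.bodyVal I ≤ R.headVal I

def isDModel (I : Interp α) (P : Set (DRule α)) : Prop := ∀ R ∈ P, dRuleSat I R

/-- A disjunctive reduct rule `𝒞 ← [F*,] A1,…,Am`. -/
structure DRedRule (α : Type) where
  head : List (Lit α)
  pos : List (Lit α)
  fstar : Bool

def DRedRule.bodyVal (r : DRedRule α) (I : Interp α) : V4 :=
  min (if r.fstar then V4.Fs else V4.T) (evalConj I r.pos)

def dredSat (I : Interp α) (r : DRedRule α) : Prop := r.bodyVal I ≤ evalDisj I r.head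

def dredModel (I : Interp α) (Q : Set (DRedRule α)) : Prop := ∀ r ∈ Q, dredSat I r

def dxredHead (I : Interp α) (body : List (Lit α)) :
    List (List (Lit α)) → List (DRedRule α)
  | [] => []
  | [c] => [⟨c, body, false⟩]
  | c :: c' :: rest =>
    if evalDisj I c = V4.Fs then ⟨c, body, true⟩ :: dxredHead I body (c' :: rest)
    else [⟨c, body, false⟩]

/-- The ×-reduct of a DLPOD rule w.r.t. `I`. -/
def dxredRule (I : Interp α) (R : DRule α) : List (DRedRule α) :=
  if ∃ b ∈ R.neg, I b = V4.T then [] else dxredHead I R.pos R.headList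

/-- The ×-reduct of a DLPOD w.r.t. `I`. -/
def dxreduct (I : Interp α) (P : Set (DRule α)) : Set (DRedRule α) :=
  { r | ∃ R ∈ P, r ∈ dxredRule I R }

/-- `M` is an answer set of the DLPOD `P`: a consistent three-valued
interpretation that is a `≤`-minimal (three-valued) model of `P^M_×`. -/
def dAnswerSet (P : Set (DRule α)) (M : Interp α) : Prop :=
  solid M ∧ consistentI M ∧ dredModel M (dxreduct M P) ∧
  ∀ N : Interp α, solid N → dredModel N (dxreduct M P) → interpLE N M → N = M

/-- A positive disjunctive rule `C1 ∨ ⋯ ∨ Cq ← A1,…,Am`. -/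
structure DPosRule (α : Type) where
  head : List (Lit α)
  pos : List (Lit α)

/-- `N` is a two-valued model of a positive disjunctive program. -/
def dposModel (N : Set (Lit α)) (Q : Set (DPosRule α)) : Prop :=
  ∀ r ∈ Q, (∀ a ∈ r.pos, a ∈ N) → ∃ c ∈ r.head, c ∈ N

/-- The Gelfond–Lifschitz reduct of a disjunctive extended logic program (a
DLPOD all of whose rule heads are single disjunctions). -/
def glDReduct (P : Set (DRule α)) (N : Set (Lit α)) : Set (DPosRule α) :=
  { r | ∃ R ∈ P, (∀ b ∈ R.neg, b ∉ N) ∧ r.head = R.c1 ∧ r.pos = R.pos }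

/-- `N` is a standard disjunctive answer set: a consistent set of literals that
is a minimal two-valued model of `P^N`. -/
def stdDAnswerSet (P : Set (DRule α)) (N : Set (Lit α)) : Prop :=
  twoConsistent N ∧ dposModel N (glDReduct P N) ∧
  ∀ N', dposModel N' (glDReduct P N) → N' ⊆ N → N' = N


/-!
Under a three-valued model `M`, a rule whose reduct is nonempty has every `not B` true, so its
body value is that of its positive part. The reduct then walks the head `C1 × ⋯ × Cn` through the
prefix of literals valued `F*`: each rule `Cj ← F*, body` holds because `M Cj = F*`, and the last
rule `Cr ← body` holds because `×` skips the `F*` prefix, so the head value is exactly `M Cr`.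
-/

namespace V4

theorem times_Fs_left (b : V4) : times Fs b = b := if_pos rfl

theorem times_of_ne_Fs {a : V4} (b : V4) (ha : a ≠ Fs) : times a b = a := if_neg ha

theorem times_Fs_right (a : V4) : times a Fs = a := by
  unfold times; split <;> simp_all

theorem notv_eq_T {a : V4} (hTs : a ≠ Ts) (hT : a ≠ T) : notv a = T := by
  cases a <;> first | rfl | contradiction

end V4

theorem evalOD_cons (v : V4) (vs : List V4) : evalOD (v :: vs) = V4.times v (evalOD vs) := rfl

theorem evalOD_singleton (v : V4) : evalOD [v] = v := V4.times_Fs_right v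

theorem evalNegs_eq_T {I : Interp α} (hI : solid I) {L : List (Lit α)}
    (hL : ¬ ∃ b ∈ L, I b = V4.T) : evalNegs I L = V4.T := by
  induction L with
  | nil => rfl
  | cons b L ih =>
    simp only [evalNegs, List.map_cons, List.foldr_cons] at ih ⊢
    rw [V4.notv_eq_T (hI b) fun hb => hL ⟨b, List.mem_cons_self, hb⟩,
      ih fun ⟨c, hc, hcT⟩ => hL ⟨c, List.mem_cons_of_mem b hc, hcT⟩]
    rfl

theorem Rule.bodyVal_eq_evalConj {I : Interp α} (hI : solid I) {R : Rule α}
    (hneg : ¬ ∃ b ∈ R.neg, I b = V4.T) : R.bodyVal I = evalConj I R.pos := by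
  rw [Rule.bodyVal, evalNegs_eq_T hI hneg]
  exact min_eq_left le_top

theorem redSat_fstar_of_eq_Fs {I : Interp α} {c : Lit α} (hc : I c = V4.Fs)
    (body : List (Lit α)) : redSat I ⟨c, body, true⟩ :=
  (min_le_left _ _).trans hc.ge

theorem redSat_of_evalConj_le {I : Interp α} {c : Lit α} {body : List (Lit α)}
    (h : evalConj I body ≤ I c) : redSat I ⟨c, body, false⟩ :=
  (min_le_right _ _).trans h

theorem redSat_of_mem_xredHead {I : Interp α} {body : List (Lit α)} :
    ∀ {hs : List (Lit α)} {r : RedRule α}, r ∈ xredHead I body hs →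
      evalConj I body ≤ evalOD (hs.map I) → redSat I r
  | [], _, hr, _ => by simp [xredHead] at hr
  | [c], r, hr, hle => by
    rw [xredHead, List.mem_singleton] at hr
    subst hr
    exact redSat_of_evalConj_le (by simpa only [List.map_cons, List.map_nil,
      evalOD_singleton] using hle)
  | c :: c' :: rest, r, hr, hle => by
    simp only [List.map_cons, evalOD_cons] at hle
    by_cases hc : I c = V4.Fs
    · rw [xredHead, if_pos hc, List.mem_cons] at hr
      rcases hr with rfl | hr
      · exact redSat_fstar_of_eq_Fs hc body
      · rw [hc, V4.times_Fs_left, ← evalOD_cons, ← List.map_cons] at hle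
        exact redSat_of_mem_xredHead hr hle
    · rw [xredHead, if_neg hc, List.mem_singleton] at hr
      subst hr
      exact redSat_of_evalConj_le (by rwa [V4.times_of_ne_Fs _ hc] at hle)

theorem redSat_of_mem_xredRule {M : Interp α} (hM : solid M) {R : Rule α}
    (hR : ruleSat M R) {r : RedRule α} (hr : r ∈ xredRule M R) : redSat M r := by
  unfold xredRule at hr
  split_ifs at hr with hneg
  · simp at hr
  · rw [ruleSat, Rule.bodyVal_eq_evalConj hM hneg] at hR
    exact redSat_of_mem_xredHead hr hR

/-- Every three-valued model of an LPOD `P` is a model of the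
×-reduct `P^M_×`. -/
theorem isModel_redModel_xreduct {α : Type} (P : Set (Rule α)) (M : Interp α)
    (hM : solid M) (h : isModel M P) : redModel M (xreduct M P) := by
  rintro r ⟨R, hRP, hr⟩
  exact redSat_of_mem_xredRule hM (h R hRP) hr
end

section
/- Let P be an LPOD and let M be a three-valued answer set of P. Then collapse(M), the set of literals L with M(L)=T, is a Brewka answer set of P (an answer set in the sense of the original two-valued LPOD semantics). -/
variable {α : Type}

/-! If `N` is a model of the Brewka reduct of `collapse M`, lower to `F*` every literal that is
`T` in `M` but not in `N`. The result is still a three-valued model of `P^M_×`: a reduct rule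
`c ← A1,…,Am` whose body stays `T` comes from a rule with no `T`-valued `Bi` and with `F*`-valued
head literals before `c`, so `c ← A1,…,Am` is in the Brewka reduct and `c ∈ N`. Leastness of `M`
then gives `collapse M ⊆ N`. That `collapse M` is a two-valued model of `P` comes from the last
rule of each rule's ×-reduct. -/

namespace V4

lemma le_Fs_of_ne {v : V4} (hT : v ≠ T) (hTs : v ≠ Ts) : v ≤ Fs := by
  cases v <;> first | decide | contradiction

lemma min_eq_T_iff {u v : V4} : min u v = T ↔ u = T ∧ v = T := by
  cases u <;> cases v <;> decide

end V4

lemma evalConj_cons (I : Interp α) (a : Lit α) (L : List (Lit α)) :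
    evalConj I (a :: L) = min (I a) (evalConj I L) := rfl

lemma evalConj_eq_T_iff {I : Interp α} {L : List (Lit α)} :
    evalConj I L = V4.T ↔ ∀ a ∈ L, I a = V4.T := by
  induction L with
  | nil => simp [evalConj]
  | cons a L ih => simp [evalConj_cons, V4.min_eq_T_iff, ih]

lemma evalConj_mono {I J : Interp α} (h : interpLE I J) (L : List (Lit α)) :
    evalConj I L ≤ evalConj J L := by
  induction L with
  | nil => exact le_rfl
  | cons a L ih => simpa only [evalConj_cons] using min_le_min (h a) ih

lemma evalConj_ne_Ts {I : Interp α} (hI : solid I) (L : List (Lit α)) :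
    evalConj I L ≠ V4.Ts := by
  induction L with
  | nil => simp [evalConj]
  | cons a L ih =>
    rw [evalConj_cons]
    rcases min_choice (I a) (evalConj I L) with h | h <;> rw [h]
    exacts [hI a, ih]

lemma redSat_false_iff {I : Interp α} {c : Lit α} {body : List (Lit α)} :
    redSat I ⟨c, body, false⟩ ↔ evalConj I body ≤ I c := by
  unfold redSat RedRule.bodyVal
  rw [if_neg Bool.false_ne_true]
  exact iff_of_eq (congrArg (· ≤ I c) (min_eq_right le_top))

lemma mem_xredHead {I : Interp α} {body : List (Lit α)} :
    ∀ {hs : List (Lit α)} {r : RedRule α}, r ∈ xredHead I body hs →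
      r.pos = body ∧ (r.fstar = true → I r.head = V4.Fs) ∧
      ∃ pre rest, hs = pre ++ r.head :: rest ∧ ∀ d ∈ pre, I d = V4.Fs
  | [], r, hr => by simp [xredHead] at hr
  | [c], r, hr => by
    simp only [xredHead, List.mem_singleton] at hr
    subst hr
    exact ⟨rfl, by simp, [], [], rfl, by simp⟩
  | c :: c' :: rest, r, hr => by
    by_cases hc : I c = V4.Fs
    · simp only [xredHead, hc, if_true, List.mem_cons] at hr
      rcases hr with rfl | hr
      · exact ⟨rfl, fun _ => hc, [], c' :: rest, rfl, by simp⟩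
      · obtain ⟨hpos, hfs, pre, rest', hsplit, hpre⟩ := mem_xredHead hr
        refine ⟨hpos, hfs, c :: pre, rest', by rw [hsplit]; rfl, ?_⟩
        simpa [hc] using hpre
    · simp only [xredHead, hc, if_false, List.mem_singleton] at hr
      subst hr
      exact ⟨rfl, by simp, [], c' :: rest, rfl, by simp⟩

lemma exists_final_mem_xredHead (I : Interp α) (body : List (Lit α)) :
    ∀ {hs : List (Lit α)}, hs ≠ [] → ∃ c ∈ hs, ⟨c, body, false⟩ ∈ xredHead I body hs
  | [], h => absurd rfl h
  | [c], _ => ⟨c, by simp, by simp [xredHead]⟩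
  | c :: c' :: rest, _ => by
    by_cases hc : I c = V4.Fs
    · obtain ⟨d, hd, hmem⟩ := exists_final_mem_xredHead I body (hs := c' :: rest) (by simp)
      exact ⟨d, List.mem_cons_of_mem c hd, by simp [xredHead, hc, hmem]⟩
    · exact ⟨c, by simp, by simp [xredHead, hc]⟩

lemma mem_xreduct {I : Interp α} {P : Set (Rule α)} {r : RedRule α} :
    r ∈ xreduct I P ↔
      ∃ R ∈ P, (∀ b ∈ R.neg, I b ≠ V4.T) ∧ r ∈ xredHead I R.pos R.headList := by
  simp only [xreduct, xredRule, Set.mem_ofPred_eq]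
  refine exists_congr fun R => and_congr_right fun _ => ?_
  split_ifs with h <;> simp_all

open Classical in
/-- On a solid `M`: the `T`s outside `N` become `F*`, all other values are kept. -/
noncomputable def demote (M : Interp α) (N : Set (Lit α)) : Interp α :=
  fun l => if l ∈ N then M l else min (M l) V4.Fs

lemma demote_le (M : Interp α) (N : Set (Lit α)) : interpLE (demote M N) M := by
  intro l
  unfold demote
  split_ifs
  exacts [le_rfl, min_le_left _ _]

lemma solid_demote {M : Interp α} (hM : solid M) (N : Set (Lit α)) : solid (demote M N) := by
  intro l
  unfold demote
  split_ifs
  · exact hM l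
  · rcases min_choice (M l) V4.Fs with h | h <;> rw [h]
    exacts [hM l, by decide]

lemma demote_eq_T_iff {M : Interp α} {N : Set (Lit α)} {l : Lit α} :
    demote M N l = V4.T ↔ M l = V4.T ∧ l ∈ N := by
  unfold demote
  split_ifs with h
  · simp [h]
  · simp only [h, and_false, iff_false]
    exact ((min_le_right _ _).trans_lt (by decide)).ne

lemma demote_of_eq_Fs {M : Interp α} {N : Set (Lit α)} {l : Lit α} (h : M l = V4.Fs) :
    demote M N l = V4.Fs := by
  unfold demote
  split_ifs <;> simp [h]

lemma brewkaModel_collapse {P : Set (Rule α)} {M : Interp α}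
    (hmod : redModel M (xreduct M P)) : brewkaModel (collapse M) P := by
  intro R hR hpos hneg
  obtain ⟨c, hc, hmem⟩ :=
    exists_final_mem_xredHead M R.pos (hs := R.headList) (by simp [Rule.headList])
  have hsat := redSat_false_iff.1 (hmod _ (mem_xreduct.2 ⟨R, hR, hneg, hmem⟩))
  rw [evalConj_eq_T_iff.2 hpos] at hsat
  exact ⟨c, hc, top_le_iff.1 hsat⟩

lemma posModel_brewkaReduct (N : Set (Lit α)) (P : Set (Rule α)) :
    posModel N (brewkaReduct N P) := by
  rintro r ⟨-, -, -, -, -, -, hhead, -, -⟩ -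
  exact hhead

lemma redModel_demote {P : Set (Rule α)} {M : Interp α} {N : Set (Lit α)} (hsol : solid M)
    (hmod : redModel M (xreduct M P)) (hN : posModel N (brewkaReduct (collapse M) P)) :
    redModel (demote M N) (xreduct M P) := by
  intro r hr
  obtain ⟨R, hR, hneg, hmem⟩ := mem_xreduct.1 hr
  obtain ⟨hpos, hfs, pre, rest, hsplit, hpre⟩ := mem_xredHead hmem
  obtain ⟨c, body, fstar⟩ := r
  simp only at hpos hfs hsplit
  subst hpos
  cases fstar with
  | true =>
    show min V4.Fs _ ≤ _
    rw [demote_of_eq_Fs (hfs rfl)]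
    exact min_le_left _ _
  | false =>
    have hMsat := redSat_false_iff.1 (hmod _ hr)
    rw [redSat_false_iff]
    by_cases hcN : c ∈ N
    · calc evalConj (demote M N) R.pos ≤ evalConj M R.pos := evalConj_mono (demote_le M N) _
        _ ≤ M c := hMsat
        _ = demote M N c := by simp [demote, hcN]
    have hbody : evalConj (demote M N) R.pos ≠ V4.T := by
      -- otherwise `c ← R.pos` is a rule of the Brewka reduct whose body holds in `N`
      intro hT
      have hposT : ∀ a ∈ R.pos, M a = V4.T ∧ a ∈ N :=
        fun a ha => demote_eq_T_iff.1 (evalConj_eq_T_iff.1 hT a ha)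
      have hMc : M c = V4.T := by
        rw [evalConj_eq_T_iff.2 fun a ha => (hposT a ha).1] at hMsat
        exact top_le_iff.1 hMsat
      refine hcN (hN ⟨c, R.pos⟩ ⟨R, hR, pre, rest, hsplit, rfl, hMc, ?_, hneg⟩
        fun a ha => (hposT a ha).2)
      intro d hd hdT
      exact absurd (hpre d hd) (by rw [show M d = V4.T from hdT]; decide)
    have hFs := V4.le_Fs_of_ne hbody (evalConj_ne_Ts (solid_demote hsol N) _)
    calc evalConj (demote M N) R.pos
        ≤ min (evalConj M R.pos) V4.Fs := le_min (evalConj_mono (demote_le M N) _) hFs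
      _ ≤ min (M c) V4.Fs := min_le_min_right _ hMsat
      _ = demote M N c := by simp [demote, hcN]

/-- The collapse of a three-valued answer set of an LPOD is a
Brewka answer set. -/
theorem collapse_threeAnswerSet_brewka {α : Type} (P : Set (Rule α)) (M : Interp α)
    (h : threeAnswerSet P M) : brewkaAnswerSet P (collapse M) := by
  obtain ⟨hsol, hcons, hmod, hleast⟩ := h
  refine ⟨hcons, brewkaModel_collapse hmod, posModel_brewkaReduct _ P, fun N hN l hl => ?_⟩
  have hle := hleast (demote M N) (solid_demote hsol N) (redModel_demote hsol hmod hN) l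
  rw [show M l = V4.T from hl] at hle
  exact (demote_eq_T_iff.1 (top_le_iff.1 hle)).2
end
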